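/- arXiv:1803.08095 — 2 statements merged into one kernel-verified Lean document; each statement's English description precedes it below -/
import Mathlib

section
/- For |q| < 1 and any injective ψ : ℕ → ℕ with positive values, ∏_{n≥1} (1 - q^{ψ(n)}) = ∏_{i≥0} ∏_{n≥1} 1/(1 + q^{2^i ψ(n)}). -/
/-!
For `‖x‖ < 1` the partial products telescope, `(1 - x) ∏_{i<N} (1 + x^{2^i}) = 1 - x^{2^N}`,
so `∏_i (1 + x^{2^i})⁻¹ = 1 - x`. Taking `x = q^{ψ n}` writes each factor on the left as a
product over `i`, and the double product may be reordered because `∑_{n,i} ‖q‖^{2^i ψ n}` is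
dominated by `∑_{n,i} ‖q‖^{ψ n} ‖q‖^i`, which converges since `ψ` is injective.
-/

open Finset Filter Topology

theorem sub_mul_prod_range_one_add_pow_two_pow {R : Type*} [CommRing R] (x : R) (N : ℕ) :
    (1 - x) * ∏ i ∈ range N, (1 + x ^ 2 ^ i) = 1 - x ^ 2 ^ N := by
  induction N with
  | zero => simp
  | succ N ih =>
    rw [prod_range_succ, ← mul_assoc, ih, pow_succ, pow_mul]
    ring

theorem one_sub_ne_zero_of_norm_lt_one {R : Type*} [NormedRing R] [NormOneClass R] {x : R}
    (hx : ‖x‖ < 1) : 1 - x ≠ 0 := fun h ↦ by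
  simp [← sub_eq_zero.mp h] at hx

theorem one_add_ne_zero_of_norm_lt_one {R : Type*} [NormedRing R] [NormOneClass R] {x : R}
    (hx : ‖x‖ < 1) : 1 + x ≠ 0 := by
  simpa using one_sub_ne_zero_of_norm_lt_one (x := -x) (by rwa [norm_neg])

theorem hasProd_one_add_pow_two_pow {𝕜 : Type*} [NormedField 𝕜] [CompleteSpace 𝕜] {x : 𝕜}
    (hx : ‖x‖ < 1) : HasProd (fun i : ℕ ↦ 1 + x ^ 2 ^ i) (1 - x)⁻¹ := by
  have hsummable : Summable fun i : ℕ ↦ ‖x ^ 2 ^ i‖ := by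
    refine (summable_geometric_of_lt_one (norm_nonneg x) hx).of_nonneg_of_le
      (fun _ ↦ norm_nonneg _) fun i ↦ ?_
    rw [norm_pow]
    exact pow_le_pow_of_le_one (norm_nonneg x) hx.le Nat.lt_two_pow_self.le
  have hx1 := one_sub_ne_zero_of_norm_lt_one hx
  have hpartial (N : ℕ) : ∏ i ∈ range N, (1 + x ^ 2 ^ i) = (1 - x)⁻¹ * (1 - x ^ 2 ^ N) := by
    rw [← sub_mul_prod_range_one_add_pow_two_pow, inv_mul_cancel_left₀ hx1]
  have hpow : Tendsto (fun N : ℕ ↦ x ^ 2 ^ N) atTop (𝓝 0) :=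
    (tendsto_pow_atTop_nhds_zero_of_norm_lt_one hx).comp
      (tendsto_pow_atTop_atTop_of_one_lt one_lt_two)
  rw [(multipliable_one_add_of_summable hsummable).hasProd_iff_tendsto_nat]
  simpa only [hpartial, sub_zero, mul_one] using
    ((tendsto_const_nhds (x := 1)).sub hpow).const_mul (1 - x)⁻¹

theorem hasProd_inv_one_add_pow_two_pow {𝕜 : Type*} [NormedField 𝕜] [CompleteSpace 𝕜] {x : 𝕜}
    (hx : ‖x‖ < 1) : HasProd (fun i : ℕ ↦ (1 + x ^ 2 ^ i)⁻¹) (1 - x) := by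
  simpa only [inv_inv] using
    (hasProd_one_add_pow_two_pow hx).inv₀ (inv_ne_zero (one_sub_ne_zero_of_norm_lt_one hx))

theorem Complex.multipliable_inv_one_add_of_summable {ι : Type*} {f : ι → ℂ} (hf : Summable f)
    (hf0 : ∀ i, 1 + f i ≠ 0) : Multipliable fun i ↦ (1 + f i)⁻¹ := by
  refine (Complex.multipliable_one_add_of_summable hf).inv₀ ?_
  rw [← Complex.cexp_tsum_eq_tprod hf0 (Complex.summable_log_one_add_of_summable hf)]
  exact Complex.exp_ne_zero _

theorem norm_pow_lt_one {𝕜 : Type*} [NormedField 𝕜] {x : 𝕜} (hx : ‖x‖ < 1) {m : ℕ}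
    (hm : m ≠ 0) : ‖x ^ m‖ < 1 := by
  rw [norm_pow]
  exact pow_lt_one₀ (norm_nonneg x) hx hm

theorem Nat.add_le_two_pow_mul {a : ℕ} (ha : 1 ≤ a) (i : ℕ) : a + i ≤ 2 ^ i * a := by
  have := Nat.lt_two_pow_self (n := i)
  nlinarith

theorem summable_pow_two_pow_mul {𝕜 : Type*} [NormedField 𝕜] [CompleteSpace 𝕜] {q : 𝕜}
    (hq : ‖q‖ < 1) {ψ : ℕ → ℕ} (hinj : Function.Injective ψ) (hpos : ∀ n, 1 ≤ ψ n) :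
    Summable fun p : ℕ × ℕ ↦ q ^ (2 ^ p.2 * ψ p.1) := by
  have hgeom := summable_geometric_of_lt_one (norm_nonneg q) hq
  have hmajorant : Summable fun p : ℕ × ℕ ↦ ‖q‖ ^ ψ p.1 * ‖q‖ ^ p.2 :=
    (hgeom.comp_injective hinj).mul_of_nonneg hgeom (fun _ ↦ pow_nonneg (norm_nonneg q) _)
      fun _ ↦ pow_nonneg (norm_nonneg q) _
  refine Summable.of_norm (hmajorant.of_nonneg_of_le (fun _ ↦ norm_nonneg _) fun p ↦ ?_)
  rw [norm_pow, ← pow_add]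
  exact pow_le_pow_of_le_one (norm_nonneg q) hq.le (Nat.add_le_two_pow_mul (hpos p.1) p.2)

theorem stmt_9 (q : ℂ) (hq : ‖q‖ < 1) (ψ : ℕ → ℕ)
    (hinj : Function.Injective ψ) (hpos : ∀ n, 1 ≤ ψ n) :
    ∏' n : ℕ, ((1 : ℂ) - q ^ ψ n) =
      ∏' i : ℕ, ∏' n : ℕ, ((1 : ℂ) + q ^ (2 ^ i * ψ n))⁻¹ := by
  have hψ (n : ℕ) : ψ n ≠ 0 := Nat.one_le_iff_ne_zero.mp (hpos n)
  have hne (n i : ℕ) : 1 + q ^ (2 ^ i * ψ n) ≠ 0 :=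
    one_add_ne_zero_of_norm_lt_one <|
      norm_pow_lt_one hq <| Nat.mul_ne_zero (by positivity) (hψ n)
  have hrow (n : ℕ) : HasProd (fun i ↦ (1 + q ^ (2 ^ i * ψ n))⁻¹) (1 - q ^ ψ n) := by
    simpa only [← pow_mul, mul_comm (ψ n)] using
      hasProd_inv_one_add_pow_two_pow (norm_pow_lt_one hq (hψ n))
  have hsum := summable_pow_two_pow_mul hq hinj hpos
  have hmul : Multipliable fun p : ℕ × ℕ ↦ (1 + q ^ (2 ^ p.2 * ψ p.1))⁻¹ :=
    Complex.multipliable_inv_one_add_of_summable hsum fun p ↦ hne p.1 p.2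
  have hcol (i : ℕ) : Multipliable fun n ↦ (1 + q ^ (2 ^ i * ψ n))⁻¹ :=
    -- `(e :)` elaborates `e` alone; unifying `f ∘ g` against the expected type times out.
    Complex.multipliable_inv_one_add_of_summable
      (hsum.comp_injective (Prod.mk_left_injective i) :) fun n ↦ hne n i
  rw [Multipliable.tprod_comm' (f := fun n i ↦ (1 + q ^ (2 ^ i * ψ n))⁻¹) hmul
    (fun n ↦ (hrow n).multipliable) hcol]
  exact tprod_congr fun n ↦ (hrow n).tprod_eq.symm
end

section
/- Let A be a set of positive integers and α a positive integer. Define Γ_α(m) as the coefficient of q^m in ∏_{i≥0} ∏_{a ∈ A} 1/(1 + q^{2^i (α+1) a}); equivalently Γ_α(m) = ∑ over nonnegative integer solutions (N_0, N_1, ...) of m = (α+1) ∑_{i≥0} 2^i N_i of ∏_{i≥0} p̄^A(N_i), with Γ_α(m) = 0 when no solution exists and Γ_α(0) = 1. Then p^A_α(n) = ∑_{i=0}^{n} p^A(n−i) · Γ_α(i) for all n. -/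
/-!
The generating functions of `p^A_α` and `p^A` are `∏_{a ∈ A} (1 - q^{(α+1)a}) / (1 - q^a)` and
`∏_{a ∈ A} 1 / (1 - q^a)`, so it suffices that `∏_{a ∈ A} (1 - q^{(α+1)a}) = ∑ Γ_α(m) q^m`.
The telescoping identity `(1 - x) ∏_{k < L} (1 + x^{2^k}) = 1 - x^{2^L}` gives
`1 - x = ∏_{k ≥ 0} 1 / (1 + x^{2^k})`, hence
`∏_{a ∈ A} (1 - q^{(α+1)a}) = ∏_{k ≥ 0} P̄(q^{2^k (α+1)})` with
`P̄(q) = ∏_{a ∈ A} 1 / (1 + q^a) = ∑ p̄^A(N) q^N`, and expanding this product of dilated series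
gives exactly the sum defining `Γ_α`. For the coefficient of `q^n` every product can be taken
finite: parts in `[1, n]`, dyadic indices `k < n`, and the leftover factors `1 - q^{2^n (α+1) a}`
do not affect coefficients below `q^{n+1}`.
-/

/-- Number of partitions of `n` with all parts in `A`. -/
noncomputable def pA (A : Set ℕ) (n : ℕ) : ℕ :=
  Nat.card {p : n.Partition // ∀ a ∈ p.parts, a ∈ A}

/-- Number of partitions of `n` with all parts in `A`, each part used at most `α` times. -/
noncomputable def pAres (A : Set ℕ) (α : ℕ) (n : ℕ) : ℕ :=
  Nat.card {p : n.Partition // (∀ a ∈ p.parts, a ∈ A) ∧ ∀ a, p.parts.count a ≤ α}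

/-- Signed count of partitions of `n` into parts from `A` by parity of number of parts. -/
noncomputable def pBar (A : Set ℕ) (n : ℕ) : ℤ :=
  (Nat.card {p : n.Partition // (∀ a ∈ p.parts, a ∈ A) ∧ Even (Multiset.card p.parts)} : ℤ) -
    (Nat.card {p : n.Partition // (∀ a ∈ p.parts, a ∈ A) ∧ Odd (Multiset.card p.parts)} : ℤ)

/-- `Γ_α(m)`: sum over nonnegative-integer solutions of `m = (α+1) ∑ 2^i N_i` of
`∏_i p̄^A(N_i)`; it is `0` if there are no solutions and `1` at `m = 0`. -/
noncomputable def Gamma (A : Set ℕ) (α : ℕ) (m : ℕ) : ℤ :=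
  ∑ᶠ (f : ℕ →₀ ℕ) (_ : (α + 1) * (f.sum fun i N => 2 ^ i * N) = m),
    ∏ᶠ i : ℕ, pBar A (f i)

open PowerSeries Finset

theorem one_sub_mul_prod_one_add_pow_two_pow {R : Type*} [CommRing R] (x : R) (L : ℕ) :
    (1 - x) * ∏ k ∈ range L, (1 + x ^ 2 ^ k) = 1 - x ^ 2 ^ L := by
  induction L with
  | zero => simp
  | succ L ih =>
    rw [prod_range_succ, ← mul_assoc, ih, pow_succ, pow_mul]
    ring

theorem Finsupp.mul_apply_le_sum {ι : Type*} (N : ι →₀ ℕ) (f : ι → ℕ) (k : ι) :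
    f k * N k ≤ N.sum fun k j => f k * j := by
  by_cases hk : k ∈ N.support
  · exact Finset.single_le_sum (f := fun k => f k * N k) (fun _ _ => Nat.zero_le _) hk
  · simp [Finsupp.notMem_support_iff.1 hk]

namespace Nat.Partition

theorem sum_toFinsupp_parts_eq_finsum {M : Type*} [AddCommMonoid M] (s : Finset ℕ) (hs : 0 ∉ s)
    (n : ℕ) (F : (ℕ →₀ ℕ) → M) :
    ∑ p : n.Partition with ∀ a ∈ p.parts, a ∈ s, F (Multiset.toFinsupp p.parts) =
      ∑ᶠ (N : ℕ →₀ ℕ) (_ : N.support ⊆ s ∧ ∑ a ∈ s, a * N a = n), F N := by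
  rw [← finsum_mem_coe_finset]
  refine finsum_mem_eq_of_bijOn (fun p => Multiset.toFinsupp p.parts) ⟨?maps, ?inj, ?surj⟩
    fun _ _ => rfl
  case maps =>
    intro p hp
    have hp : p.parts.toFinset ⊆ s := fun a ha =>
      (mem_filter.1 (mem_coe.1 hp)).2 a (Multiset.mem_toFinset.1 ha)
    refine ⟨by simpa using hp, ?_⟩
    conv_rhs => rw [← p.parts_sum, sum_multiset_count_of_subset _ _ hp]
    simp [mul_comm]
  case inj =>
    intro p _ q _ h
    exact Nat.Partition.ext (Multiset.toFinsupp.injective h)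
  case surj =>
    rintro N ⟨hsupp, hsum⟩
    have hN : ∀ a ∈ N.toMultiset, a ∈ s := fun a ha => hsupp ((Finsupp.mem_toMultiset _ _).1 ha)
    refine ⟨⟨N.toMultiset, fun ha => Nat.pos_of_ne_zero fun h => hs (h ▸ hN _ ha), ?_⟩,
      by simpa using hN, by simp⟩
    rw [Finsupp.sum_toMultiset, Finsupp.sum_of_support_subset _ hsupp _ (by simp), ← hsum]
    simp [mul_comm]

end Nat.Partition

namespace PowerSeries

section Semiring

variable {R : Type*} [CommSemiring R]

-- `expand a _ (mk g)` without the side condition `a ≠ 0` (see `expandMk_eq_expand`), so that the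
-- weight can vary over the index of a finite product.
noncomputable def expandMk (a : ℕ) (g : ℕ → R) : R⟦X⟧ :=
  mk fun d => if a ∣ d then g (d / a) else 0

@[simp]
theorem coeff_expandMk (a : ℕ) (g : ℕ → R) (d : ℕ) :
    coeff d (expandMk a g) = if a ∣ d then g (d / a) else 0 :=
  coeff_mk _ _

theorem coeff_prod_expandMk {ι : Type*} [DecidableEq ι] (s : Finset ι) (w : ι → ℕ)
    (hw : ∀ i ∈ s, w i ≠ 0) (g : ι → ℕ → R) (m : ℕ) :
    coeff m (∏ i ∈ s, expandMk (w i) (g i)) =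
      ∑ᶠ (N : ι →₀ ℕ) (_ : N.support ⊆ s ∧ ∑ i ∈ s, w i * N i = m), ∏ i ∈ s, g i (N i) := by
  rw [coeff_prod]
  simp_rw [coeff_expandMk, prod_ite_zero, ← sum_filter]
  rw [← finsum_mem_coe_finset]
  set T := {l ∈ s.finsuppAntidiag m | ∀ i ∈ s, w i ∣ l i}
  have mem_T {l : ι →₀ ℕ} : l ∈ T ↔ (∑ i ∈ s, l i = m ∧ l.support ⊆ s) ∧ ∀ i ∈ s, w i ∣ l i := by
    simp [T, mem_finsuppAntidiag]
  let scale (l : ι →₀ ℕ) : ι →₀ ℕ := Finsupp.onFinset l.support (fun i => l i / w i)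
    fun i hi => Finsupp.mem_support_iff.2 fun h => hi (by simp [h])
  refine finsum_mem_eq_of_bijOn scale ⟨?maps, ?inj, ?surj⟩ fun l _ => rfl
  case maps =>
    intro l hl
    obtain ⟨⟨hsum, hsupp⟩, hdvd⟩ := mem_T.1 hl
    refine ⟨Finsupp.support_onFinset_subset.trans hsupp, ?_⟩
    rw [← hsum]
    exact sum_congr rfl fun i hi => Nat.mul_div_cancel' (hdvd i hi)
  case inj =>
    intro l hl l' hl' h
    obtain ⟨⟨-, hsupp⟩, hdvd⟩ := mem_T.1 hl
    obtain ⟨⟨-, hsupp'⟩, hdvd'⟩ := mem_T.1 hl'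
    ext i
    by_cases hi : i ∈ s
    · rw [← Nat.mul_div_cancel' (hdvd i hi), ← Nat.mul_div_cancel' (hdvd' i hi)]
      exact congrArg (w i * ·) (DFunLike.congr_fun h i)
    · rw [Finsupp.notMem_support_iff.1 (hi <| hsupp ·),
        Finsupp.notMem_support_iff.1 (hi <| hsupp' ·)]
  case surj =>
    rintro N ⟨hsupp, hsum⟩
    let l : ι →₀ ℕ := Finsupp.onFinset N.support (fun i => w i * N i)
      fun i hi => Finsupp.mem_support_iff.2 fun h => hi (by simp [h])
    have hl : l.support ⊆ s := Finsupp.support_onFinset_subset.trans hsupp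
    refine ⟨l, mem_T.2 ⟨⟨hsum, hl⟩, fun i _ => dvd_mul_right _ _⟩, ?_⟩
    ext i
    by_cases hi : i ∈ s
    · exact Nat.mul_div_cancel_left _ (Nat.pos_of_ne_zero (hw i hi))
    · simp [scale, l, Finsupp.notMem_support_iff.1 (hi <| hsupp ·)]

theorem coeff_prod_expandMk_eq_sum_partitions (s : Finset ℕ) (hs : 0 ∉ s) (g : ℕ → ℕ → R) (n : ℕ) :
    coeff n (∏ a ∈ s, expandMk a (g a)) =
      ∑ p : n.Partition with ∀ a ∈ p.parts, a ∈ s, ∏ a ∈ s, g a (p.parts.count a) :=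
  (coeff_prod_expandMk s (fun a => a) (fun _ ha h => hs (h ▸ ha)) g n).trans
    (Nat.Partition.sum_toFinsupp_parts_eq_finsum s hs n _).symm

end Semiring

section Ring

variable {R : Type*} [CommRing R]

theorem expandMk_eq_expand {a : ℕ} (ha : a ≠ 0) (g : ℕ → R) :
    expandMk a g = expand a ha (mk g) := by
  ext d
  simp [coeff_expand]

theorem expand_expandMk {c a : ℕ} (hc : c ≠ 0) (ha : a ≠ 0) (g : ℕ → R) :
    expand c hc (expandMk a g) = expandMk (c * a) g := by
  rw [expandMk_eq_expand ha, expandMk_eq_expand (mul_ne_zero hc ha), expand_mul]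

theorem mk_ite_le_eq (α : ℕ) :
    mk (fun k => if k ≤ α then (1 : R) else 0) = mk 1 * (1 - X ^ (α + 1)) := by
  ext k
  rw [mul_sub, mul_one, map_sub, coeff_mul_X_pow', coeff_mk, coeff_mk]
  split_ifs <;> first | omega | simp

theorem mk_neg_one_pow_mul_one_add_X : mk (fun k => (-1 : R) ^ k) * (1 + X) = 1 := by
  ext (_ | k)
  · simp
  · simp [mul_add, pow_succ]

theorem one_sub_X_pow_eq_mul_prod {b : ℕ} (hb : b ≠ 0) (L : ℕ) :
    (1 - X ^ b : R⟦X⟧) =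
      (1 - X ^ (2 ^ L * b)) * ∏ k ∈ range L, expandMk (2 ^ k * b) fun j => (-1) ^ j := by
  have inv (k : ℕ) : (1 + X ^ (2 ^ k * b)) * expandMk (2 ^ k * b) (fun j => (-1 : R) ^ j) = 1 := by
    have hk : 2 ^ k * b ≠ 0 := mul_ne_zero (by positivity) hb
    rw [expandMk_eq_expand hk, mul_comm, ← expand_X (2 ^ k * b) hk,
      ← map_one (expand (2 ^ k * b) hk), ← map_add, ← map_mul, mk_neg_one_pow_mul_one_add_X,
      map_one]
  calc (1 - X ^ b : R⟦X⟧)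
      = (1 - X ^ b) * ∏ k ∈ range L,
          (1 + (X ^ b) ^ 2 ^ k) * expandMk (2 ^ k * b) (fun j => (-1 : R) ^ j) := by
        simp_rw [← pow_mul, mul_comm b, inv, prod_const_one, mul_one]
    _ = (1 - X ^ (2 ^ L * b)) * ∏ k ∈ range L, expandMk (2 ^ k * b) fun j => (-1) ^ j := by
        rw [prod_mul_distrib, ← mul_assoc, one_sub_mul_prod_one_add_pow_two_pow, ← pow_mul,
          mul_comm b]

theorem coeff_mul_prod_one_sub_X_pow {ι : Type*} (f : R⟦X⟧) (s : Finset ι) (M : ι → ℕ) {n : ℕ}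
    (hM : ∀ i ∈ s, n < M i) : coeff n (f * ∏ i ∈ s, (1 - X ^ M i)) = coeff n f := by
  have hdvd : (X : R⟦X⟧) ^ (n + 1) ∣ ∏ i ∈ s, (1 - X ^ M i) - 1 := by
    refine prod_induction _ (fun g : R⟦X⟧ => X ^ (n + 1) ∣ g - 1) (fun g h hg hh => ?_) (by simp)
      fun i hi => ?_
    · rw [show g * h - 1 = g * (h - 1) + (g - 1) by ring]
      exact dvd_add (dvd_mul_of_dvd_right hh g) hg
    · rw [sub_sub_cancel_left, dvd_neg]
      exact pow_dvd_pow X (hM i hi)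
  obtain ⟨h, hh⟩ := hdvd
  rw [← sub_add_cancel (∏ i ∈ s, (1 - X ^ M i)) 1, hh, mul_add, mul_one, map_add,
    mul_left_comm, coeff_X_pow_mul', if_neg (by omega), zero_add]

theorem expandMk_ite_le_eq {a : ℕ} (ha : a ≠ 0) (α : ℕ) :
    expandMk a (fun k => if k ≤ α then (1 : R) else 0) =
      expandMk a 1 * (1 - X ^ ((α + 1) * a)) := by
  rw [expandMk_eq_expand ha, mk_ite_le_eq, map_mul, ← expandMk_eq_expand ha, map_sub,
    map_one, map_pow, expand_X, ← pow_mul, mul_comm a]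

theorem prod_expandMk_ite_le_eq (s : Finset ℕ) (hs : 0 ∉ s) (α L : ℕ) :
    ∏ a ∈ s, expandMk a (fun k => if k ≤ α then (1 : R) else 0) =
      (∏ k ∈ range L, expand (2 ^ k * (α + 1)) (by positivity)
          (∏ a ∈ s, expandMk a fun j => (-1) ^ j)) *
        (∏ a ∈ s, expandMk a 1) * ∏ a ∈ s, (1 - X ^ (2 ^ L * ((α + 1) * a))) := by
  have hs' : ∀ a ∈ s, a ≠ 0 := fun a ha h => hs (h ▸ ha)
  have factor (a : ℕ) (ha : a ∈ s) :
      expandMk a (fun k => if k ≤ α then (1 : R) else 0) =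
        expandMk a 1 * (1 - X ^ (2 ^ L * ((α + 1) * a))) *
          ∏ k ∈ range L, expandMk (2 ^ k * (α + 1) * a) fun j => (-1) ^ j := by
    simp_rw [expandMk_ite_le_eq (hs' a ha), mul_assoc,
      ← one_sub_X_pow_eq_mul_prod (mul_ne_zero (Nat.succ_ne_zero α) (hs' a ha))]
  have dyadic : ∏ k ∈ range L, ∏ a ∈ s, expandMk (2 ^ k * (α + 1) * a) (fun j => (-1 : R) ^ j) =
      ∏ k ∈ range L, expand (2 ^ k * (α + 1)) (by positivity)
        (∏ a ∈ s, expandMk a fun j => (-1) ^ j) :=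
    prod_congr rfl fun k _ => by
      rw [map_prod]
      exact prod_congr rfl fun a ha => (expand_expandMk _ (hs' a ha) _).symm
  rw [prod_congr rfl factor, prod_mul_distrib, prod_mul_distrib, prod_comm, dyadic]
  ring

theorem coeff_prod_expand_two_pow_mul (α : ℕ) (P : R⟦X⟧) (p : ℕ → R) {L m : ℕ} (hm : m < 2 ^ L)
    (hp : ∀ j ≤ m, coeff j P = p j) (hp0 : p 0 = 1) :
    coeff m (∏ k ∈ range L, expand (2 ^ k * (α + 1)) (by positivity) P) =
      ∑ᶠ (N : ℕ →₀ ℕ) (_ : (α + 1) * N.sum (fun k j => 2 ^ k * j) = m), ∏ᶠ k, p (N k) := by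
  have hexpand (k : ℕ) : expand (2 ^ k * (α + 1)) (by positivity) P =
      expandMk (2 ^ k * (α + 1)) fun j => coeff j P := by
    ext d
    simp [coeff_expand]
  simp_rw [hexpand]
  rw [coeff_prod_expandMk _ _ fun k _ => by positivity]
  refine finsum_congr fun N => ?_
  have weighted_sum (hN : N.support ⊆ range L) :
      (α + 1) * (N.sum fun k j => 2 ^ k * j) = ∑ k ∈ range L, 2 ^ k * (α + 1) * N k := by
    rw [Finsupp.sum_of_support_subset _ hN _ (by simp), mul_sum]
    exact sum_congr rfl fun k _ => by ring
  have term_le (h : (α + 1) * (N.sum fun k j => 2 ^ k * j) = m) (k : ℕ) : 2 ^ k * N k ≤ m :=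
    h ▸ (N.mul_apply_le_sum _ k).trans (Nat.le_mul_of_pos_left _ α.succ_pos)
  have support_subset (h : (α + 1) * (N.sum fun k j => 2 ^ k * j) = m) :
      N.support ⊆ range L := fun k hk =>
    mem_range.2 <| (Nat.pow_lt_pow_iff_right (by norm_num)).1 <| calc
      2 ^ k ≤ 2 ^ k * N k := Nat.le_mul_of_pos_right _ (Nat.pos_of_ne_zero (by simpa using hk))
      _ ≤ m := term_le h k
      _ < 2 ^ L := hm
  refine finsum_congr_Prop (propext ⟨fun h => ?_, fun h => ⟨support_subset h, ?_⟩⟩) fun h => ?_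
  · rw [weighted_sum h.1, h.2]
  · rw [← weighted_sum (support_subset h), h]
  · rw [finprod_eq_prod_of_mulSupport_subset (s := range L)]
    · exact prod_congr rfl fun k _ =>
        hp _ ((Nat.le_mul_of_pos_left _ (by positivity)).trans (term_le h k))
    · intro k hk
      refine support_subset h (Finsupp.mem_support_iff.2 fun h0 => hk ?_)
      simp [h0, hp0]

end Ring

end PowerSeries

section Counting

open scoped Classical

-- The parts that can occur in a partition of a number `≤ n`: truncating `A` to them turns every
-- generating function below into a finite product.
noncomputable def truncParts (A : Set ℕ) (n : ℕ) : Finset ℕ := {a ∈ Icc 1 n | a ∈ A}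

theorem zero_notMem_truncParts (A : Set ℕ) (n : ℕ) : 0 ∉ truncParts A n := by
  simp [truncParts]

theorem parts_mem_truncParts_iff (A : Set ℕ) {m n : ℕ} (hmn : m ≤ n) (p : m.Partition) :
    (∀ a ∈ p.parts, a ∈ truncParts A n) ↔ ∀ a ∈ p.parts, a ∈ A := by
  refine forall₂_congr fun a ha => ?_
  simp [truncParts, Nat.one_le_iff_ne_zero, (p.parts_pos ha).ne', (p.le_of_mem_parts ha).trans hmn]

theorem pA_eq_coeff (A : Set ℕ) {m n : ℕ} (hmn : m ≤ n) :
    (pA A m : ℤ) = coeff m (∏ a ∈ truncParts A n, expandMk a 1) := by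
  rw [coeff_prod_expandMk_eq_sum_partitions _ (zero_notMem_truncParts A n)]
  simp only [Pi.one_apply, prod_const_one, sum_const, nsmul_one]
  rw [pA, Nat.card_eq_fintype_card, Fintype.card_subtype]
  simp_rw [parts_mem_truncParts_iff A hmn]

theorem pAres_eq_coeff (A : Set ℕ) (α n : ℕ) :
    (pAres A α n : ℤ) =
      coeff n (∏ a ∈ truncParts A n, expandMk a fun k => if k ≤ α then 1 else 0) := by
  rw [coeff_prod_expandMk_eq_sum_partitions _ (zero_notMem_truncParts A n)]
  simp only [prod_boole, sum_boole, filter_filter]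
  rw [pAres, Nat.card_eq_fintype_card, Fintype.card_subtype]
  congr 2
  refine filter_congr fun p _ => ?_
  rw [parts_mem_truncParts_iff A le_rfl]
  refine and_congr_right fun hA => ⟨fun h a _ => h a, fun h a => ?_⟩
  by_cases ha : a ∈ p.parts
  · exact h a ((parts_mem_truncParts_iff A le_rfl p).2 hA a ha)
  · simp [Multiset.count_eq_zero_of_notMem ha]

theorem pBar_eq_sum (A : Set ℕ) (m : ℕ) :
    pBar A m = ∑ p : m.Partition with ∀ a ∈ p.parts, a ∈ A, (-1) ^ Multiset.card p.parts := by
  simp_rw [neg_one_pow_eq_ite, sum_ite, sum_const, filter_filter, Nat.not_even_iff_odd]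
  rw [pBar, Nat.card_eq_fintype_card, Nat.card_eq_fintype_card, Fintype.card_subtype,
    Fintype.card_subtype]
  simp [sub_eq_add_neg]

theorem pBar_eq_coeff (A : Set ℕ) {m n : ℕ} (hmn : m ≤ n) :
    pBar A m = coeff m (∏ a ∈ truncParts A n, expandMk a fun k => (-1) ^ k) := by
  rw [coeff_prod_expandMk_eq_sum_partitions _ (zero_notMem_truncParts A n), pBar_eq_sum]
  refine sum_congr (filter_congr fun p _ => (parts_mem_truncParts_iff A hmn p).symm) fun p hp => ?_
  rw [prod_pow_eq_pow_sum, Multiset.sum_count_eq_card (mem_filter.1 hp).2]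

theorem pBar_zero (A : Set ℕ) : pBar A 0 = 1 := by
  simp [pBar_eq_coeff A le_rfl, truncParts]

theorem Gamma_eq_coeff (A : Set ℕ) (α : ℕ) {m n : ℕ} (hmn : m ≤ n) :
    Gamma A α m = coeff m (∏ k ∈ range n, expand (2 ^ k * (α + 1)) (by positivity)
      (∏ a ∈ truncParts A n, expandMk a fun j => (-1) ^ j)) :=
  (coeff_prod_expand_two_pow_mul α _ (pBar A) (hmn.trans_lt n.lt_two_pow_self)
    (fun _ hj => (pBar_eq_coeff A (hj.trans hmn)).symm) (pBar_zero A)).symm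

end Counting

theorem stmt_14_general (A : Set ℕ) (α : ℕ) (n : ℕ) :
    (pAres A α n : ℤ) =
      ∑ i ∈ Finset.range (n + 1), (pA A (n - i) : ℤ) * Gamma A α i := by
  have hfar (a : ℕ) (ha : a ∈ truncParts A n) : n < 2 ^ n * ((α + 1) * a) := by
    have : a ≠ 0 := ne_of_mem_of_not_mem ha (zero_notMem_truncParts A n)
    exact n.lt_two_pow_self.trans_le (Nat.le_mul_of_pos_right _ (by positivity))
  rw [pAres_eq_coeff, prod_expandMk_ite_le_eq _ (zero_notMem_truncParts A n) α n,
    coeff_mul_prod_one_sub_X_pow _ _ _ hfar, coeff_mul,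
    Nat.sum_antidiagonal_eq_sum_range_succ fun i j => coeff i _ * coeff j _]
  refine sum_congr rfl fun i hi => ?_
  have hi : i ≤ n := Nat.lt_succ_iff.1 (mem_range.1 hi)
  rw [Gamma_eq_coeff A α hi, pA_eq_coeff A (Nat.sub_le n i), mul_comm]

theorem stmt_14 (A : Set ℕ) (hA : ∀ a ∈ A, 0 < a) (α : ℕ) (hα : 1 ≤ α) (n : ℕ) :
    (pAres A α n : ℤ) =
      ∑ i ∈ Finset.range (n + 1), (pA A (n - i) : ℤ) * Gamma A α i :=
  stmt_14_general A α n
end
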